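/- There exist absolute constants c_1 ∈ (0,1) and C_2 ∈ (0,∞) such that the following holds. Let G = Z_{m_1} ⊕ ... ⊕ Z_{m_d} be a finite Abelian group of size n, let k ≥ 1, let x ∈ G with integer coordinates x_j, set g_j := gcd(x_j, m_j) and s_* := max_{1≤j≤d} m_j/g_j, and let Z_1, ..., Z_k be i.i.d. uniform on G with Z_i^{(j)} ∈ {0,...,m_j−1} the j-th coordinate of Z_i. Write {alpha} for the unique element of (−1/2, 1/2] with alpha − {alpha} ∈ ℤ. If s_* ≤ C_2·n^{1/k}, then P( (1/k)·Σ_{i=1}^k { Σ_{j=1}^d x_j·Z_i^{(j)}/m_j }^2 ≤ c_1·n^{−2/k} ) ≤ s_*^{−9k/10}; and if s_* > C_2·n^{1/k}, then P( (1/k)·Σ_{i=1}^k { Σ_{j=1}^d x_j·Z_i^{(j)}/m_j }^2 ≤ c_1·n^{−2/k} ) ≤ 2^{−k}/n. -/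

import Mathlib

/-- `{α}`: the unique element of `(−1/2, 1/2]` with `α − {α} ∈ ℤ`. -/
noncomputable def signedFrac (a : ℝ) : ℝ := a - (⌈a - 1 / 2⌉ : ℤ)

/-- Probability, over a uniformly random `k`-tuple of elements of `G`, of the event `p`. -/
noncomputable def tupleProb (G : Type*) [Fintype G] (k : ℕ) (p : (Fin k → G) → Prop) : ℝ :=
  (Nat.card {z : Fin k → G // p z} : ℝ) / (Fintype.card G : ℝ) ^ k

/-
Let `L` be the common denominator of the fractions `x j / m j`, the lcm of the reduced
denominators `m j / gcd (x j) (m j)`, so that `s ≤ L`. The phase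
`z ↦ ∑ j, x j * z j / m j (mod 1)` is a homomorphism from `G` onto the cyclic group
`(1/L)ℤ/ℤ`, so the phases of `Z₁, …, Z_k` are independent and uniform on `{b / L}`.
Chernoff's bound then gives, for every `μ ≥ 0`, `P ≤ (exp (μ T) θ_L(μ) / L) ^ k` with
`θ_L(μ) = ∑_b exp (-μ {b/L}²)`, and comparison with a Gaussian integral gives
`θ_L(π a²) ≤ 1 + L / a`. Taking `a ≍ L` when `L ≲ n^{1/k}` and `a ≍ n^{1/k}` otherwise
yields both bounds, with `c₁ = 10⁻¹⁰` and `C₂ = 12`.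
-/
open Real Finset

lemma signedFrac_add_intCast (a : ℝ) (t : ℤ) : signedFrac (a + t) = signedFrac a := by
  have h : a + t - 1 / 2 = a - 1 / 2 + t := by ring
  rw [signedFrac, signedFrac, h, Int.ceil_add_intCast]
  push_cast
  ring

lemma signedFrac_eq_self_or_eq_sub_one {a : ℝ} (h0 : 0 ≤ a) (h1 : a < 1) :
    signedFrac a = a ∨ signedFrac a = a - 1 := by
  have hc : ⌈a - 1 / 2⌉ = 0 ∨ ⌈a - 1 / 2⌉ = 1 := by
    have := Int.ceil_le.2 (show a - 1 / 2 ≤ ((1 : ℤ) : ℝ) by push_cast; linarith)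
    have := Int.lt_ceil.2 (show ((-1 : ℤ) : ℝ) < a - 1 / 2 by push_cast; linarith)
    omega
  rcases hc with hc | hc
  · left; rw [signedFrac, hc]; simp
  · right; rw [signedFrac, hc]; simp

lemma signedFrac_natCast_div_eq_val (L : ℕ) [NeZero L] (S : ℕ) :
    signedFrac ((S : ℝ) / L) = signedFrac (((S : ZMod L).val : ℝ) / L) := by
  have hL : (L : ℝ) ≠ 0 := NeZero.ne _
  rw [ZMod.val_natCast, ← signedFrac_add_intCast ((S % L : ℕ) / L) (S / L : ℕ)]
  congr 1
  rw [div_add' _ _ _ hL, div_left_inj' hL]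
  conv_lhs => rw [← Nat.mod_add_div' S L]
  rw [Int.cast_natCast, Nat.cast_add, Nat.cast_mul]

lemma tupleProb_le_one (G : Type*) [Fintype G] [Nonempty G] (k : ℕ) (p : (Fin k → G) → Prop) :
    tupleProb G k p ≤ 1 := by
  refine div_le_one_of_le₀ ?_ (by positivity)
  calc (Nat.card {z // p z} : ℝ) ≤ Nat.card (Fin k → G) := by
        exact_mod_cast Nat.card_le_card_of_injective _ Subtype.val_injective
    _ = (Fintype.card G : ℝ) ^ k := by simp

section Counting

variable {G A : Type*} [AddGroup G] [AddGroup A] [Fintype G] [Fintype A]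

lemma card_filter_comp_mul_card_of_surjective [DecidableEq A] {f : G →+ A}
    (hf : Function.Surjective f) (Q : A → Prop) [DecidablePred Q] :
    #{g | Q (f g)} * Fintype.card A = #{a | Q a} * Fintype.card G := by
  set F := #{g | f g = 0}
  have hfiber : ∀ a, #{g | f g = a} = F := fun a =>
    AddMonoidHom.card_fiber_eq_of_mem_range f (hf a) (hf 0)
  have hG : Fintype.card G = Fintype.card A * F := by
    rw [← card_univ, card_eq_sum_card_fiberwise fun g _ => mem_univ (f g)]
    simp [hfiber]
  have hQ : #{g | Q (f g)} = #{a | Q a} * F := by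
    rw [card_eq_sum_card_fiberwise (t := {a | Q a}) fun g hg => by simpa using hg]
    rw [sum_const_nat fun a ha => ?_]
    rw [filter_filter, ← hfiber a]
    congr 1
    ext g
    simp only [mem_filter, mem_univ, true_and, and_iff_right_iff_imp]
    rintro rfl
    simpa using ha
  rw [hQ, hG]
  ring

lemma tupleProb_comp_of_surjective {f : G →+ A} (hf : Function.Surjective f) (k : ℕ)
    (Q : (Fin k → A) → Prop) :
    tupleProb G k (fun z => Q (f ∘ z)) = tupleProb A k Q := by
  classical
  have hcard := card_filter_comp_mul_card_of_surjective (f := f.compLeft (Fin k))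
    hf.comp_left Q
  simp only [Fintype.card_fun, Fintype.card_fin] at hcard
  have hA : (0 : ℝ) < Fintype.card A := by exact_mod_cast Fintype.card_pos
  have hG : (0 : ℝ) < Fintype.card G := by exact_mod_cast Fintype.card_pos
  rw [tupleProb, tupleProb, Nat.card_eq_fintype_card, Nat.card_eq_fintype_card,
    Fintype.card_subtype, Fintype.card_subtype, div_eq_div_iff (by positivity) (by positivity)]
  exact_mod_cast hcard

end Counting

lemma tupleProb_sum_le_le_exp_mul_pow {B : Type*} [Fintype B] [Nonempty B] (W : B → ℝ)
    (k : ℕ) (t : ℝ) {μ : ℝ} (hμ : 0 ≤ μ) :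
    tupleProb B k (fun a => ∑ i, W (a i) ≤ t) ≤
      exp (μ * t) * ((∑ b, exp (-μ * W b)) / Fintype.card B) ^ k := by
  classical
  have hcount : (#{a : Fin k → B | ∑ i, W (a i) ≤ t} : ℝ) ≤
      ∑ a : Fin k → B, exp (μ * (t - ∑ i, W (a i))) := by
    rw [card_eq_sum_ones, Nat.cast_sum, Nat.cast_one]
    refine (sum_le_sum fun a ha => one_le_exp ?_).trans
      (sum_le_sum_of_subset_of_nonneg (filter_subset _ _) fun _ _ _ => (exp_pos _).le)
    exact mul_nonneg hμ (sub_nonneg.2 (mem_filter.1 ha).2)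
  have hfactor : ∑ a : Fin k → B, exp (μ * (t - ∑ i, W (a i))) =
      exp (μ * t) * (∑ b, exp (-μ * W b)) ^ k := by
    rw [Fintype.sum_pow, mul_sum]
    refine sum_congr rfl fun a _ => ?_
    rw [← exp_sum, ← exp_add, ← mul_sum, neg_mul, ← mul_neg, ← mul_add, sub_eq_add_neg]
  rw [tupleProb, Nat.card_eq_fintype_card, Fintype.card_subtype, div_pow, ← mul_div_assoc,
    div_le_div_iff_of_pos_right (by exact_mod_cast pow_pos Fintype.card_pos k)]
  exact hcount.trans hfactor.le

lemma sum_exp_neg_mul_sq_succ_le {l : ℝ} (hl : 0 < l) (N : ℕ) :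
    ∑ c ∈ range N, exp (-l * ((c : ℝ) + 1) ^ 2) ≤ √(π / l) / 2 := by
  have hanti : AntitoneOn (fun t : ℝ => exp (-l * t ^ 2)) (Set.Icc 0 (0 + N)) := by
    intro p hp q _ hpq
    have hp0 : 0 ≤ p := hp.1
    simp only [exp_le_exp, neg_mul, neg_le_neg_iff]
    gcongr
  calc ∑ c ∈ range N, exp (-l * ((c : ℝ) + 1) ^ 2)
      = ∑ c ∈ range N, (fun t : ℝ => exp (-l * t ^ 2)) (0 + (c + 1 : ℕ)) := by
        push_cast; simp only [zero_add]
    _ ≤ ∫ t in (0 : ℝ)..0 + N, exp (-l * t ^ 2) := hanti.sum_le_integral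
    _ ≤ ∫ t in Set.Ioi (0 : ℝ), exp (-l * t ^ 2) := by
        rw [intervalIntegral.integral_of_le (by positivity)]
        exact MeasureTheory.setIntegral_mono_set (integrable_exp_neg_mul_sq hl).integrableOn
          (.of_forall fun _ => (exp_pos _).le) Set.Ioc_subset_Ioi_self.eventuallyLE
    _ = √(π / l) / 2 := integral_gaussian_Ioi l

noncomputable def thetaSum (L : ℕ) [NeZero L] (μ : ℝ) : ℝ :=
  ∑ b : ZMod L, exp (-μ * signedFrac ((b.val : ℝ) / L) ^ 2)

lemma thetaSum_nonneg (L : ℕ) [NeZero L] (μ : ℝ) : 0 ≤ thetaSum L μ :=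
  sum_nonneg fun _ _ => (exp_pos _).le

lemma sum_zmod_val_eq_sum_range {M : Type*} [AddCommMonoid M] (L : ℕ) [NeZero L] (f : ℕ → M) :
    ∑ b : ZMod L, f b.val = ∑ u ∈ range L, f u :=
  sum_nbij' ZMod.val Nat.cast (fun b _ => mem_range.2 b.val_lt) (fun _ _ => mem_univ _)
    (fun b _ => ZMod.natCast_zmod_val b) (fun _ hu => ZMod.val_cast_of_lt (mem_range.1 hu))
    fun _ _ => rfl

lemma thetaSum_pi_mul_sq_le (L : ℕ) [NeZero L] {a : ℝ} (ha : 0 < a) :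
    thetaSum L (π * a ^ 2) ≤ 1 + L / a := by
  have hL : (0 : ℝ) < L := by exact_mod_cast NeZero.pos L
  set μ := π * a ^ 2
  set l := μ / (L : ℝ) ^ 2 with hl_def
  have hl : 0 < l := by positivity
  have hsqrt : √(π / l) = L / a := by
    rw [hl_def, show π / (π * a ^ 2 / (L : ℝ) ^ 2) = ((L : ℝ) / a) ^ 2 by
      field_simp, sqrt_sq (by positivity)]
  -- `{u / L}` is `u / L` or `u / L - 1`, so each term is bounded by the two one-sided terms.
  have hpoint : ∀ u ∈ range L, exp (-μ * signedFrac ((u : ℝ) / L) ^ 2) ≤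
      exp (-l * (u : ℝ) ^ 2) + exp (-l * ((((L - 1 - u : ℕ) : ℝ)) + 1) ^ 2) := by
    intro u hu
    have huL := mem_range.1 hu
    have hrefl : (((L - 1 - u : ℕ) : ℝ)) + 1 = L - u := by
      rw [Nat.cast_sub (by omega), Nat.cast_sub (by omega)]; ring
    have hu_div : (u : ℝ) / L < 1 := by
      rw [div_lt_one hL]; exact_mod_cast huL
    have e1 : -μ * ((u : ℝ) / L) ^ 2 = -l * (u : ℝ) ^ 2 := by
      rw [hl_def]; field_simp
    have e2 : -μ * ((u : ℝ) / L - 1) ^ 2 = -l * (((L - 1 - u : ℕ) : ℝ) + 1) ^ 2 := by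
      rw [hrefl, hl_def]; field_simp; ring
    rcases signedFrac_eq_self_or_eq_sub_one (by positivity) hu_div with h | h
    · rw [h, e1]; exact le_add_of_nonneg_right (exp_pos _).le
    · rw [h, e2]; exact le_add_of_nonneg_left (exp_pos _).le
  calc thetaSum L μ = ∑ u ∈ range L, exp (-μ * signedFrac ((u : ℝ) / L) ^ 2) :=
        sum_zmod_val_eq_sum_range L (fun u => exp (-μ * signedFrac ((u : ℝ) / L) ^ 2))
    _ ≤ ∑ u ∈ range L, exp (-l * (u : ℝ) ^ 2) +
          ∑ u ∈ range L, exp (-l * ((((L - 1 - u : ℕ) : ℝ)) + 1) ^ 2) := by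
        rw [← sum_add_distrib]; exact sum_le_sum hpoint
    _ ≤ ∑ u ∈ range (L + 1), exp (-l * (u : ℝ) ^ 2) +
          ∑ c ∈ range L, exp (-l * ((c : ℝ) + 1) ^ 2) := by
        rw [sum_range_reflect (fun c => exp (-l * ((c : ℝ) + 1) ^ 2)) L]
        refine add_le_add_left (sum_le_sum_of_subset_of_nonneg
          (range_subset_range.2 L.le_succ) fun _ _ _ => (exp_pos _).le) _
    _ ≤ 1 + L / a := by
        rw [sum_range_succ', Nat.cast_zero, zero_pow two_ne_zero, mul_zero, exp_zero, ← hsqrt]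
        push_cast
        linarith [sum_exp_neg_mul_sq_succ_le hl L]

section CommonDenominator

variable {d : ℕ} (m x : Fin d → ℕ)

def reducedDenom (j : Fin d) : ℕ := m j / Nat.gcd (x j) (m j)

def commonDenom : ℕ := univ.lcm (reducedDenom m x)

def commonNum (j : Fin d) : ℕ :=
  x j / Nat.gcd (x j) (m j) * (commonDenom m x / reducedDenom m x j)

lemma reducedDenom_dvd_commonDenom (j : Fin d) : reducedDenom m x j ∣ commonDenom m x :=
  dvd_lcm (mem_univ j)

lemma mul_commonNum (j : Fin d) : m j * commonNum m x j = x j * commonDenom m x := by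
  have hm : Nat.gcd (x j) (m j) * reducedDenom m x j = m j :=
    Nat.mul_div_cancel' (Nat.gcd_dvd_right _ _)
  rw [← hm, commonNum]
  calc _ = (Nat.gcd (x j) (m j) * (x j / Nat.gcd (x j) (m j))) *
          (reducedDenom m x j * (commonDenom m x / reducedDenom m x j)) := by ring
    _ = x j * commonDenom m x := by
        rw [Nat.mul_div_cancel' (Nat.gcd_dvd_left _ _),
          Nat.mul_div_cancel' (reducedDenom_dvd_commonDenom m x j)]

def coordHom (j : Fin d) : ZMod (m j) →+ ZMod (commonDenom m x) :=
  ZMod.lift (m j) ⟨zmultiplesHom _ (commonNum m x j : ZMod (commonDenom m x)), by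
    rw [zmultiplesHom_apply, natCast_zsmul, nsmul_eq_mul, ← Nat.cast_mul, mul_commonNum,
      Nat.cast_mul, ZMod.natCast_self, mul_zero]⟩

def pairingHom : (∀ j, ZMod (m j)) →+ ZMod (commonDenom m x) :=
  ∑ j, (coordHom m x j).comp (Pi.evalAddMonoidHom (fun j => ZMod (m j)) j)

lemma coordHom_intCast (j : Fin d) (a : ℤ) :
    coordHom m x j a = a • (commonNum m x j : ZMod (commonDenom m x)) :=
  ZMod.lift_coe _ _ a

lemma pairingHom_single (j : Fin d) :
    pairingHom m x (Pi.single j 1) = commonNum m x j := by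
  rw [pairingHom, AddMonoidHom.finsetSum_apply, sum_eq_single j]
  · simpa using coordHom_intCast m x j 1
  · intro i _ hij
    simp [Pi.single_eq_of_ne hij]
  · simp

variable [∀ j, NeZero (m j)]

lemma reducedDenom_ne_zero (j : Fin d) : reducedDenom m x j ≠ 0 :=
  (Nat.div_pos (Nat.le_of_dvd (NeZero.pos _) (Nat.gcd_dvd_right _ _))
    (Nat.gcd_pos_of_pos_right _ (NeZero.pos _))).ne'

instance : NeZero (commonDenom m x) :=
  ⟨fun h => by
    obtain ⟨j, -, hj⟩ := lcm_eq_zero_iff.1 h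
    exact reducedDenom_ne_zero m x j hj⟩

lemma addOrderOf_commonNum (j : Fin d) :
    addOrderOf (commonNum m x j : ZMod (commonDenom m x)) = reducedDenom m x j := by
  have hq := reducedDenom_dvd_commonDenom m x j
  have hcop : Nat.Coprime (reducedDenom m x j) (x j / Nat.gcd (x j) (m j)) :=
    (Nat.coprime_div_gcd_div_gcd (Nat.gcd_pos_of_pos_right _ (NeZero.pos _))).symm
  have hgcd : (commonDenom m x).gcd (commonNum m x j) = commonDenom m x / reducedDenom m x j := by
    conv_lhs => rw [← Nat.div_mul_cancel hq, commonNum, mul_comm (x j / _)]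
    rw [Nat.gcd_mul_left, hcop.gcd_eq_one, mul_one]
  rw [ZMod.addOrderOf_coe _ (NeZero.ne _), hgcd, Nat.div_div_self hq (NeZero.ne _)]

lemma coordHom_apply (j : Fin d) (a : ZMod (m j)) :
    coordHom m x j a = ((commonNum m x j * a.val : ℕ) : ZMod (commonDenom m x)) := by
  have ha : a = ((a.val : ℤ) : ZMod (m j)) := by simp
  conv_lhs => rw [ha]
  rw [coordHom_intCast, natCast_zsmul, nsmul_eq_mul, mul_comm, Nat.cast_mul]

lemma pairingHom_apply (z : ∀ j, ZMod (m j)) :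
    pairingHom m x z = ((∑ j, commonNum m x j * (z j).val : ℕ) : ZMod (commonDenom m x)) := by
  simp only [pairingHom, AddMonoidHom.finsetSum_apply, AddMonoidHom.comp_apply,
    Pi.evalAddMonoidHom_apply, coordHom_apply, Nat.cast_sum]

lemma pairingHom_surjective : Function.Surjective (pairingHom m x) := by
  rw [← AddMonoidHom.range_eq_top]
  apply AddSubgroup.eq_top_of_card_eq
  refine Nat.dvd_antisymm (AddSubgroup.card_addSubgroup_dvd_card _) ?_
  rw [Nat.card_zmod]
  refine Finset.lcm_dvd fun j _ => ?_
  rw [← addOrderOf_commonNum]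
  exact AddSubgroup.addOrderOf_dvd_natCard _ ⟨_, pairingHom_single m x j⟩

end CommonDenominator

section PhaseProbability

variable {d : ℕ} (m x : Fin d → ℕ) [∀ j, NeZero (m j)] {k : ℕ} {ν : ℝ}

lemma signedFrac_sum_eq_pairingHom (z : ∀ j, ZMod (m j)) :
    signedFrac (∑ j, (x j : ℝ) * ((z j).val : ℝ) / m j) =
      signedFrac ((pairingHom m x z).val / commonDenom m x) := by
  rw [pairingHom_apply, ← signedFrac_natCast_div_eq_val]
  congr 1
  push_cast
  rw [sum_div]
  refine sum_congr rfl fun j _ => ?_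
  have h : (m j : ℝ) * commonNum m x j = x j * commonDenom m x := by
    exact_mod_cast mul_commonNum m x j
  rw [div_eq_div_iff (NeZero.ne _) (NeZero.ne _)]
  linear_combination (-((z j).val : ℝ)) * h

noncomputable def lowPhaseProb (k : ℕ) (T : ℝ) : ℝ :=
  tupleProb (∀ j, ZMod (m j)) k fun Z =>
    (1 / (k : ℝ)) * ∑ i,
      (signedFrac (∑ j, (x j : ℝ) * ((Z i j).val : ℝ) / (m j : ℝ))) ^ 2 ≤ T

lemma lowPhaseProb_le (hk : 0 < k) (T : ℝ) {μ : ℝ} (hμ : 0 ≤ μ) :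
    lowPhaseProb m x k T ≤
      (exp (μ * T) * thetaSum (commonDenom m x) μ / commonDenom m x) ^ k := by
  set L := commonDenom m x
  have hevent : (fun Z : Fin k → ∀ j, ZMod (m j) => (1 / (k : ℝ)) *
      ∑ i, (signedFrac (∑ j, (x j : ℝ) * ((Z i j).val : ℝ) / (m j : ℝ))) ^ 2 ≤ T) =
      fun Z => ∑ i, signedFrac (((pairingHom m x ∘ Z) i).val / L) ^ 2 ≤ k * T := by
    funext Z
    simp only [Function.comp_apply, signedFrac_sum_eq_pairingHom]
    rw [one_div, inv_mul_le_iff₀ (by exact_mod_cast hk)]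
  rw [lowPhaseProb, hevent]
  refine (tupleProb_comp_of_surjective (pairingHom_surjective m x) k
    fun a => ∑ i, signedFrac ((a i).val / L) ^ 2 ≤ k * T).trans_le ?_
  refine (tupleProb_sum_le_le_exp_mul_pow (fun b : ZMod L => signedFrac (b.val / L) ^ 2) k _
    hμ).trans_eq ?_
  rw [ZMod.card, mul_left_comm, exp_nat_mul, ← mul_pow, mul_div_assoc]
  rfl

lemma lowPhaseProb_le_of_commonDenom_le (hk : 0 < k) (hν : 0 < ν)
    (hL : (commonDenom m x : ℝ) ≤ 40 * ν) :
    lowPhaseProb m x k (1 / 10 ^ 10 * (ν ^ 2)⁻¹) ≤ (1.07 / commonDenom m x) ^ k := by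
  set L := commonDenom m x
  have hL0 : (0 : ℝ) < L := by exact_mod_cast NeZero.pos L
  refine (lowPhaseProb_le m x hk _ (μ := π * (100 * L) ^ 2) (by positivity)).trans
    (pow_le_pow_left₀ (div_nonneg (mul_nonneg (exp_pos _).le (thetaSum_nonneg _ _)) hL0.le) ?_ k)
  rw [div_le_div_iff_of_pos_right hL0]
  have hθ : thetaSum L (π * (100 * L) ^ 2) ≤ 1 + 1 / 100 := by
    convert thetaSum_pi_mul_sq_le L (a := 100 * L) (by positivity) using 2
    field_simp
  have hμT : π * (100 * L) ^ 2 * (1 / 10 ^ 10 * (ν ^ 2)⁻¹) ≤ 1 / 100 := by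
    rw [show π * (100 * L) ^ 2 * (1 / 10 ^ 10 * (ν ^ 2)⁻¹) = π * L ^ 2 / (10 ^ 6 * ν ^ 2) by
      field_simp; ring, div_le_iff₀ (by positivity)]
    have : (L : ℝ) ^ 2 ≤ 1600 * ν ^ 2 := by nlinarith
    nlinarith [pi_le_four, pi_pos]
  have hexp : exp (π * (100 * L) ^ 2 * (1 / 10 ^ 10 * (ν ^ 2)⁻¹)) ≤ 100 / 99 :=
    calc _ ≤ exp (1 / 100) := exp_le_exp.2 hμT
      _ ≤ 1 / (1 - 1 / 100) := exp_bound_div_one_sub_of_interval (by norm_num) (by norm_num)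
      _ = 100 / 99 := by norm_num
  calc _ ≤ 100 / 99 * (1 + 1 / 100) :=
        mul_le_mul hexp hθ (thetaSum_nonneg _ _) (by norm_num)
    _ ≤ 1.07 := by norm_num

lemma lowPhaseProb_le_three_div (hk : 0 < k) (hν : 0 < ν) :
    lowPhaseProb m x k (1 / 10 ^ 10 * (ν ^ 2)⁻¹) ≤
      (3 / commonDenom m x + 3 / (1000 * ν)) ^ k := by
  set L := commonDenom m x
  have hL0 : (0 : ℝ) < L := by exact_mod_cast NeZero.pos L
  refine (lowPhaseProb_le m x hk _ (μ := π * (1000 * ν) ^ 2) (by positivity)).trans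
    (pow_le_pow_left₀ (div_nonneg (mul_nonneg (exp_pos _).le (thetaSum_nonneg _ _)) hL0.le) ?_ k)
  have hμT : π * (1000 * ν) ^ 2 * (1 / 10 ^ 10 * (ν ^ 2)⁻¹) ≤ 1 := by
    rw [show π * (1000 * ν) ^ 2 * (1 / 10 ^ 10 * (ν ^ 2)⁻¹) = π / 10 ^ 4 by field_simp; ring]
    linarith [pi_le_four]
  have hexp : exp (π * (1000 * ν) ^ 2 * (1 / 10 ^ 10 * (ν ^ 2)⁻¹)) ≤ 3 :=
    (exp_le_exp.2 hμT).trans exp_one_lt_three.le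
  calc _ ≤ 3 * (1 + L / (1000 * ν)) / L := by
        refine div_le_div_of_nonneg_right ?_ hL0.le
        exact mul_le_mul hexp (thetaSum_pi_mul_sq_le L (a := 1000 * ν) (by positivity))
          (thetaSum_nonneg _ _) (by norm_num)
    _ = 3 / L + 3 / (1000 * ν) := by field_simp

lemma lowPhaseProb_le_rpow_of_le_twelve_mul (hk : 0 < k) {s : ℕ} (hs : 2 ≤ s)
    (hsL : s ≤ commonDenom m x) (hsν : (s : ℝ) ≤ 12 * ν) :
    lowPhaseProb m x k (1 / 10 ^ 10 * (ν ^ 2)⁻¹) ≤ (s : ℝ) ^ (-(9 * (k : ℝ) / 10)) := by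
  set L := commonDenom m x
  have hs2 : (2 : ℝ) ≤ s := by exact_mod_cast hs
  have hsL' : (s : ℝ) ≤ L := by exact_mod_cast hsL
  have hν : 0 < ν := by linarith
  rw [show -(9 * (k : ℝ) / 10) = -(9 / 10) * k by ring, rpow_mul_natCast (by positivity)]
  rcases le_or_gt (L : ℝ) (40 * ν) with hL | hL
  · refine (lowPhaseProb_le_of_commonDenom_le m x hk hν hL).trans
      (pow_le_pow_left₀ (by positivity) ?_ k)
    have h107 : (1.07 : ℝ) ≤ (s : ℝ) ^ (1 / 10 : ℝ) :=
      calc (1.07 : ℝ) = (1.07 ^ 10) ^ ((10 : ℕ)⁻¹ : ℝ) :=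
            (pow_rpow_inv_natCast (by norm_num) (by norm_num)).symm
        _ ≤ (s : ℝ) ^ ((10 : ℕ)⁻¹ : ℝ) :=
            rpow_le_rpow (by positivity) (by linarith) (by positivity)
        _ = (s : ℝ) ^ (1 / 10 : ℝ) := by norm_num
    calc 1.07 / (L : ℝ) ≤ (s : ℝ) ^ (1 / 10 : ℝ) / s :=
          div_le_div₀ (by positivity) h107 (by positivity) hsL'
      _ = (s : ℝ) ^ (-(9 / 10) : ℝ) := by rw [← rpow_sub_one (by positivity)]; norm_num
  · refine (lowPhaseProb_le_three_div m x hk hν).trans (pow_le_pow_left₀ (by positivity) ?_ k)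
    calc 3 / (L : ℝ) + 3 / (1000 * ν) ≤ 3 / (40 * ν) + 3 / (1000 * ν) := by
          gcongr
      _ ≤ 1 / (12 * ν) := by field_simp; linarith
      _ ≤ 1 / s := by gcongr
      _ ≤ (s : ℝ) ^ (-(9 / 10) : ℝ) := by
          rw [one_div, ← rpow_neg_one]
          exact rpow_le_rpow_of_exponent_le (by linarith) (by norm_num)

lemma lowPhaseProb_le_of_twelve_mul_lt (hk : 0 < k) (hν : 0 < ν)
    (hLν : 12 * ν < commonDenom m x) :
    lowPhaseProb m x k (1 / 10 ^ 10 * (ν ^ 2)⁻¹) ≤ (1 / (2 * ν)) ^ k := by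
  refine (lowPhaseProb_le_three_div m x hk hν).trans (pow_le_pow_left₀ (by positivity) ?_ k)
  calc 3 / (commonDenom m x : ℝ) + 3 / (1000 * ν) ≤ 3 / (12 * ν) + 3 / (1000 * ν) := by
        gcongr
    _ ≤ 1 / (2 * ν) := by field_simp; linarith

end PhaseProbability

theorem statement9 :
    ∃ c₁ C₂ : ℝ, 0 < c₁ ∧ c₁ < 1 ∧ 0 < C₂ ∧
    ∀ (d : ℕ), 0 < d → ∀ (m : Fin d → ℕ) [∀ j, NeZero (m j)],
    ∀ (k : ℕ), 1 ≤ k →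
    ∀ (x : Fin d → ℕ), (∀ j, x j < m j) →
    ∀ n : ℕ, n = Fintype.card (∀ j, ZMod (m j)) →
    ∀ s : ℕ, s = Finset.univ.sup (fun j => m j / Nat.gcd (x j) (m j)) →
      (((s : ℝ) ≤ C₂ * (n : ℝ) ^ (1 / (k : ℝ)) →
        tupleProb (∀ j, ZMod (m j)) k (fun Z =>
            (1 / (k : ℝ)) * ∑ i,
              (signedFrac (∑ j, (x j : ℝ) * ((Z i j).val : ℝ) / (m j : ℝ))) ^ 2 ≤
            c₁ * (n : ℝ) ^ (-(2 / (k : ℝ)))) ≤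
          (s : ℝ) ^ (-(9 * (k : ℝ) / 10))) ∧
      (C₂ * (n : ℝ) ^ (1 / (k : ℝ)) < (s : ℝ) →
        tupleProb (∀ j, ZMod (m j)) k (fun Z =>
            (1 / (k : ℝ)) * ∑ i,
              (signedFrac (∑ j, (x j : ℝ) * ((Z i j).val : ℝ) / (m j : ℝ))) ^ 2 ≤
            c₁ * (n : ℝ) ^ (-(2 / (k : ℝ)))) ≤
          (2 : ℝ) ^ (-(k : ℝ)) / (n : ℝ))) := by
  refine ⟨1 / 10 ^ 10, 12, by norm_num, by norm_num, by norm_num, ?_⟩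
  intro d hd m _ k hk x _ n hn s hs
  have hsL : s ≤ commonDenom m x := hs ▸ univ.sup_le fun j _ =>
    Nat.le_of_dvd (NeZero.pos _) (reducedDenom_dvd_commonDenom m x j)
  have hs1 : 1 ≤ s := hs ▸ (le_sup (f := reducedDenom m x) (mem_univ ⟨0, hd⟩)).trans'
    (Nat.one_le_iff_ne_zero.2 (reducedDenom_ne_zero m x _))
  have hn0 : (0 : ℝ) < n := by exact_mod_cast hn ▸ Fintype.card_pos
  set ν := (n : ℝ) ^ (1 / (k : ℝ)) with hν_def
  have hν : 0 < ν := by positivity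
  have hνk : ν ^ k = n := by
    rw [hν_def, one_div]; exact rpow_inv_natCast_pow (by positivity) (by omega)
  have hT : (n : ℝ) ^ (-(2 / (k : ℝ))) = (ν ^ 2)⁻¹ := by
    rw [rpow_neg (by positivity), ← rpow_natCast, ← rpow_mul (by positivity)]
    congr 2; push_cast; ring
  change (_ → lowPhaseProb m x k _ ≤ _) ∧ (_ → lowPhaseProb m x k _ ≤ _)
  rw [hT]
  refine ⟨fun hsν => ?_, fun hsν => ?_⟩
  · obtain rfl | hs2 := hs1.eq_or_lt
    · rw [Nat.cast_one, one_rpow]; exact tupleProb_le_one _ k _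
    · exact lowPhaseProb_le_rpow_of_le_twelve_mul m x hk hs2 hsL hsν
  · calc _ ≤ (1 / (2 * ν)) ^ k :=
          lowPhaseProb_le_of_twelve_mul_lt m x hk hν (hsν.trans_le (by exact_mod_cast hsL))
      _ = (2 : ℝ) ^ (-(k : ℝ)) / n := by
          rw [one_div, inv_pow, mul_pow, hνk, rpow_neg (by norm_num), rpow_natCast, mul_inv,
            div_eq_mul_inv]
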